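/- arXiv:1802.10302 — 3 statements merged into one kernel-verified Lean document; each statement's English description precedes it below -/
import Mathlib

section
/- If Y_1, ..., Y_n are independent random variables with P(a ≤ Y_i ≤ b) = 1 for all i where a < b, then for every t > 0, P(∑_{i=1}^n (Y_i - E[Y_i]) ≥ n t) ≤ exp(-2 n t² / (b - a)²). -/
open MeasureTheory ProbabilityTheory Filter Set
open scoped Classical

noncomputable def orderStat (n k : ℕ) (f : ℕ → ℝ) : ℝ :=
  sInf {x : ℝ | k ≤ ((Finset.range n).filter (fun i => f i ≤ x)).card}

noncomputable def empCDF (n : ℕ) (f : ℕ → ℝ) (x : ℝ) : ℝ :=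
  (((Finset.range n).filter (fun i => f i ≤ x)).card : ℝ) / n

variable {Ω : Type*}

/-- Bootstrap sample: `X (J n i ω) ω`, where the `J n i` are i.i.d. uniform
selection indices on `{0, ..., n-1}`, independent of the data `X`. -/
noncomputable def bsample (X : ℕ → Ω → ℝ) (J : ℕ → ℕ → Ω → ℕ) (n i : ℕ) (ω : Ω) : ℝ :=
  X (J n i ω) ω

/-- `v̂*_{n,l}`, the `⌊(n+l)/2⌋`-th bootstrap order statistic. -/
noncomputable def bmed (X : ℕ → Ω → ℝ) (J : ℕ → ℕ → Ω → ℕ) (n l : ℕ) (ω : Ω) : ℝ :=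
  orderStat n ((n + l) / 2) (fun i => bsample X J n i ω)

/-- `ξ̂*_{n,m,l}`, the `⌊(n+m)/2⌋`-th order statistic of `|X*_i - v̂*_{n,l}|`. -/
noncomputable def bmad (X : ℕ → Ω → ℝ) (J : ℕ → ℕ → Ω → ℕ) (n m l : ℕ) (ω : Ω) : ℝ :=
  orderStat n ((n + m) / 2) (fun i => |bsample X J n i ω - bmed X J n l ω|)

/-- Bootstrap empirical CDF `F*_n`. -/
noncomputable def bECDF (X : ℕ → Ω → ℝ) (J : ℕ → ℕ → Ω → ℕ) (n : ℕ) (ω : Ω) (x : ℝ) : ℝ :=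
  empCDF n (fun i => bsample X J n i ω) x

/-- Bootstrap sample median `Med*_n`. -/
noncomputable def bMedStar (X : ℕ → Ω → ℝ) (J : ℕ → ℕ → Ω → ℕ) (n : ℕ) (ω : Ω) : ℝ :=
  (bmed X J n 1 ω + bmed X J n 2 ω) / 2

/-- Bootstrap sample MAD `MAD*_n`. -/
noncomputable def bMADStar (X : ℕ → Ω → ℝ) (J : ℕ → ℕ → Ω → ℕ) (n : ℕ) (ω : Ω) : ℝ :=
  (orderStat n ((n + 1) / 2) (fun i => |bsample X J n i ω - bMedStar X J n ω|)
    + orderStat n ((n + 2) / 2) (fun i => |bsample X J n i ω - bMedStar X J n ω|)) / 2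

/-- One-dimensional projection depth `PD(x, F) = 1/(1+|x-v|/ξ)`. -/
noncomputable def pdepth (v ξ x : ℝ) : ℝ := 1 / (1 + |x - v| / ξ)

/-- Projection depth weighted mean `PWM(F)`. -/
noncomputable def pwm (μ : Measure ℝ) (w : ℝ → ℝ) (v ξ : ℝ) : ℝ :=
  (∫ x, x * w (pdepth v ξ x) ∂μ) / (∫ x, w (pdepth v ξ x) ∂μ)

/-- The kernel `f(x,y)` of the Bahadur representation of the projection depth. -/
noncomputable def fker (F : ℝ → ℝ) (v ξ x y : ℝ) : ℝ :=
  |x - v| / (ξ + |x - v|) ^ 2 *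
      ((1 / 2 - if v - ξ < y ∧ y ≤ v + ξ then 1 else 0)
        / (deriv F (v - ξ) + deriv F (v + ξ)))
    + (|x - v| * (deriv F (v + ξ) - deriv F (v - ξ)) /
          ((deriv F (v - ξ) + deriv F (v + ξ)) * (ξ + |x - v|) ^ 2)
        + ξ * Real.sign (x - v) / (ξ + |x - v|) ^ 2) *
      ((1 / 2 - if y ≤ v then 1 else 0) / deriv F v)

/-- The influence-type function `K(x)`. -/
noncomputable def Kfun (μ : Measure ℝ) (F w : ℝ → ℝ) (v ξ x : ℝ) : ℝ :=
  ((∫ y, (y - pwm μ w v ξ) * deriv w (pdepth v ξ y) * fker F v ξ y x ∂μ)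
      + (x - pwm μ w v ξ) * w (pdepth v ξ x)) / (∫ x, w (pdepth v ξ x) ∂μ)

/-- Bootstrap sample projection depth weighted mean `PWM(F*_n)`. -/
noncomputable def pwmStar (X : ℕ → Ω → ℝ) (J : ℕ → ℕ → Ω → ℕ) (w : ℝ → ℝ) (n : ℕ) (ω : Ω) : ℝ :=
  (∑ i ∈ Finset.range n,
      w (pdepth (bMedStar X J n ω) (bMADStar X J n ω) (bsample X J n i ω)) * bsample X J n i ω) /
    (∑ i ∈ Finset.range n,
      w (pdepth (bMedStar X J n ω) (bMADStar X J n ω) (bsample X J n i ω)))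


theorem ProbabilityTheory.measureReal_sum_sub_integral_ge_le {Ω ι : Type*}
    {mΩ : MeasurableSpace Ω} {μ : Measure Ω} [IsProbabilityMeasure μ] [Fintype ι]
    {Y : ι → Ω → ℝ} (hmeas : ∀ i, AEMeasurable (Y i) μ) (hindep : iIndepFun Y μ) {a b : ℝ}
    (hbound : ∀ i, ∀ᵐ ω ∂μ, Y i ω ∈ Icc a b) {t : ℝ} (ht : 0 ≤ t) :
    μ.real {ω | Fintype.card ι * t ≤ ∑ i, (Y i ω - μ[Y i])} ≤
      Real.exp (-2 * Fintype.card ι * t ^ 2 / (b - a) ^ 2) := by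
  have hcentered : iIndepFun (fun i ω ↦ Y i ω - μ[Y i]) μ :=
    hindep.comp (fun i (x : ℝ) ↦ x - ∫ ω, Y i ω ∂μ) (fun _ ↦ measurable_id.sub_const _)
  have hsubG := HasSubgaussianMGF.measure_sum_ge_le_of_iIndepFun hcentered (s := Finset.univ)
    (fun i _ ↦ hasSubgaussianMGF_of_mem_Icc (hmeas i) (hbound i)) (ε := Fintype.card ι * t)
    (by positivity)
  refine hsubG.trans_eq (congrArg Real.exp ?_)
  obtain hι | hι := (Fintype.card ι).eq_zero_or_pos
  · simp [hι]
  have hnorm : ((‖b - a‖₊ : ℝ) / 2) ^ 2 = (b - a) ^ 2 / 4 := by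
    rw [coe_nnnorm, Real.norm_eq_abs, div_pow, sq_abs]; norm_num
  simp only [Finset.sum_const, Finset.card_univ, nsmul_eq_mul, NNReal.coe_mul, NNReal.coe_natCast,
    NNReal.coe_pow, NNReal.coe_div, NNReal.coe_ofNat, hnorm]
  field_simp
  ring

theorem hoeffding_inequality_general {Ω : Type*} [MeasureSpace Ω]
    [IsProbabilityMeasure (ℙ : Measure Ω)]
    (n : ℕ) (Y : Fin n → Ω → ℝ)
    (hmeas : ∀ i, Measurable (Y i))
    (hindep : iIndepFun Y ℙ)
    (a b : ℝ)
    (hbound : ∀ i, ℙ {ω | Y i ω ∈ Icc a b} = 1)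
    (t : ℝ) (ht : 0 < t) :
    ℙ {ω | (n : ℝ) * t ≤ ∑ i, (Y i ω - ∫ ω', Y i ω' ∂ℙ)} ≤
      ENNReal.ofReal (Real.exp (-2 * n * t ^ 2 / (b - a) ^ 2)) := by
  have hae : ∀ i, ∀ᵐ ω ∂ℙ, Y i ω ∈ Icc a b := fun i ↦ by
    rw [ae_iff_measure_eq ((hmeas i) measurableSet_Icc).nullMeasurableSet, hbound i, measure_univ]
  rw [← ofReal_measureReal]
  gcongr
  simpa using measureReal_sum_sub_integral_ge_le (fun i ↦ (hmeas i).aemeasurable) hindep hae ht.le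

theorem hoeffding_inequality {Ω : Type*} [MeasureSpace Ω]
    [IsProbabilityMeasure (ℙ : Measure Ω)]
    (n : ℕ) (Y : Fin n → Ω → ℝ)
    (hmeas : ∀ i, Measurable (Y i))
    (hindep : iIndepFun Y ℙ)
    (hint : ∀ i, Integrable (Y i) ℙ)
    (a b : ℝ) (hab : a < b)
    (hbound : ∀ i, ℙ {ω | Y i ω ∈ Icc a b} = 1)
    (t : ℝ) (ht : 0 < t) :
    ℙ {ω | (n : ℝ) * t ≤ ∑ i, (Y i ω - ∫ ω', Y i ω' ∂ℙ)} ≤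
      ENNReal.ofReal (Real.exp (-2 * n * t ^ 2 / (b - a) ^ 2)) :=
  hoeffding_inequality_general n Y hmeas hindep a b hbound t ht
end

section
/- Let {U_n} and {V_n} be sequences of random variables on a common probability space such that (a) V_n = O_p(1) as n → ∞, and (b) for all real t and all ε > 0, lim_{n→∞} P(U_n ≥ t + ε, V_n ≤ t) = 0 and lim_{n→∞} P(U_n ≤ t, V_n ≥ t + ε) = 0. Then U_n - V_n → 0 in probability as n → ∞. -/
/-!
On the event `|V n| ≤ M` the value `V n` lies in a fixed compact interval, which a finite grid of
mesh `δ / 2` covers. If `|U n - V n| > δ` there, some grid point `t` separates `U n` and `V n` by a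
gap of `δ / 2`, i.e. one of the events of (b) occurs at `t`. So `P(|U n - V n| > δ)` is at most
`P(|V n| > M)` plus finitely many probabilities tending to `0`, and `M` makes the first one small.
-/

open MeasureTheory ProbabilityTheory Filter Set
open scoped Classical

variable {Ω : Type*}

open scoped ENNReal

theorem ENNReal.tendsto_nhds_zero_of_forall_ofReal {α : Type*} {l : Filter α} {u : α → ℝ≥0∞}
    (h : ∀ ε : ℝ, 0 < ε → ∀ᶠ x in l, u x ≤ ENNReal.ofReal ε) : Tendsto u l (nhds 0) := by
  refine ENNReal.tendsto_nhds_zero.2 fun ε hε => ?_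
  obtain ⟨r, -, hr0, hrε⟩ := ENNReal.lt_iff_exists_real_btwn.1 hε
  filter_upwards [h r (ENNReal.ofReal_pos.1 hr0)] with x hx
  exact hx.trans hrε.le

theorem exists_finset_forall_exists_mem_Icc {η : ℝ} (hη : 0 < η) (M : ℝ) :
    ∃ T : Finset ℝ, ∀ a, |a| ≤ M → ∃ t ∈ T, t ∈ Icc a (a + η) := by
  refine ⟨(Finset.Icc (-⌈M / η⌉) ⌈M / η⌉).image fun k : ℤ => k * η, fun a ha => ?_⟩
  have hceil_mul : a ≤ ⌈a / η⌉ * η := (div_le_iff₀ hη).1 (Int.le_ceil _)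
  refine ⟨⌈a / η⌉ * η, Finset.mem_image_of_mem _ (Finset.mem_Icc.2 ⟨?_, ?_⟩), hceil_mul, ?_⟩
  · rw [neg_le, ← Int.cast_le (R := ℝ), Int.cast_neg]
    calc (-⌈a / η⌉ : ℝ) ≤ -(a / η) := neg_le_neg (Int.le_ceil _)
      _ ≤ M / η := by rw [← neg_div]; gcongr; exact (neg_le_abs a).trans ha
      _ ≤ ⌈M / η⌉ := Int.le_ceil _
  · exact Int.ceil_mono (by gcongr; exact (le_abs_self a).trans ha)
  · have hceil_lt := Int.ceil_lt_add_one (a / η)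
    calc (⌈a / η⌉ : ℝ) * η ≤ (a / η + 1) * η := by gcongr
      _ = a + η := by field_simp

theorem exists_threshold_separating_of_lt_abs_sub {δ M : ℝ} (hδ : 0 < δ) {T : Finset ℝ}
    (hT : ∀ a, |a| ≤ M + δ → ∃ t ∈ T, t ∈ Icc a (a + δ / 2)) {u v : ℝ} (hv : |v| ≤ M)
    (huv : δ < |u - v|) : ∃ t ∈ T, (t + δ / 2 ≤ u ∧ v ≤ t) ∨ (u ≤ t ∧ t + δ / 2 ≤ v) := by
  rcases lt_abs.1 huv with huv | huv
  · obtain ⟨t, htT, hvt, htv⟩ := hT v (by linarith [abs_nonneg v])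
    exact ⟨t, htT, .inl ⟨by linarith, hvt⟩⟩
  · obtain ⟨t, htT, hvt, htv⟩ := hT (v - δ) ((abs_sub _ _).trans (by rw [abs_of_pos hδ]; linarith))
    exact ⟨t, htT, .inr ⟨by linarith, by linarith⟩⟩

theorem measure_lt_abs_sub_le {Ω : Type*} [MeasurableSpace Ω] (μ : Measure Ω) (U V : Ω → ℝ)
    {δ M : ℝ} (hδ : 0 < δ) {T : Finset ℝ}
    (hT : ∀ a, |a| ≤ M + δ → ∃ t ∈ T, t ∈ Icc a (a + δ / 2)) :
    μ {ω | δ < |U ω - V ω|} ≤ μ {ω | M < |V ω|} + ∑ t ∈ T,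
      (μ {ω | t + δ / 2 ≤ U ω ∧ V ω ≤ t} + μ {ω | U ω ≤ t ∧ t + δ / 2 ≤ V ω}) := by
  have hsub : {ω | δ < |U ω - V ω|} ⊆ {ω | M < |V ω|} ∪ ⋃ t ∈ T,
      ({ω | t + δ / 2 ≤ U ω ∧ V ω ≤ t} ∪ {ω | U ω ≤ t ∧ t + δ / 2 ≤ V ω}) := by
    intro ω hω
    rcases lt_or_ge M |V ω| with hV | hV
    · exact .inl hV
    · obtain ⟨t, htT, ht⟩ := exists_threshold_separating_of_lt_abs_sub hδ hT hV hω
      exact .inr (mem_biUnion htT ht)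
  calc μ {ω | δ < |U ω - V ω|}
      ≤ μ {ω | M < |V ω|} + μ (⋃ t ∈ T,
          ({ω | t + δ / 2 ≤ U ω ∧ V ω ≤ t} ∪ {ω | U ω ≤ t ∧ t + δ / 2 ≤ V ω})) :=
        (measure_mono hsub).trans (measure_union_le _ _)
    _ ≤ _ := by
        gcongr
        exact (measure_biUnion_finset_le _ _).trans
          (Finset.sum_le_sum fun t _ => measure_union_le _ _)

theorem ghosh_lemma_general {Ω : Type*} [MeasureSpace Ω]
    (U V : ℕ → Ω → ℝ)
    (hV : ∀ ε > (0 : ℝ), ∃ M : ℝ, ∀ᶠ n : ℕ in atTop,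
      ℙ {ω | M < |V n ω|} < ENNReal.ofReal ε)
    (hb1 : ∀ (t ε : ℝ), 0 < ε →
      Tendsto (fun n => ℙ {ω | t + ε ≤ U n ω ∧ V n ω ≤ t}) atTop (nhds 0))
    (hb2 : ∀ (t ε : ℝ), 0 < ε →
      Tendsto (fun n => ℙ {ω | U n ω ≤ t ∧ t + ε ≤ V n ω}) atTop (nhds 0)) :
    ∀ δ > (0 : ℝ), Tendsto (fun n => ℙ {ω | δ < |U n ω - V n ω|}) atTop (nhds 0) := by
  intro δ hδ
  refine ENNReal.tendsto_nhds_zero_of_forall_ofReal fun ε hε => ?_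
  obtain ⟨M, hM⟩ := hV (ε / 2) (half_pos hε)
  obtain ⟨T, hT⟩ := exists_finset_forall_exists_mem_Icc (half_pos hδ) (M + δ)
  have hsum : Tendsto (fun n => ∑ t ∈ T, (ℙ {ω | t + δ / 2 ≤ U n ω ∧ V n ω ≤ t}
      + ℙ {ω | U n ω ≤ t ∧ t + δ / 2 ≤ V n ω})) atTop (nhds 0) := by
    simpa using tendsto_finsetSum T fun t _ =>
      (hb1 t _ (half_pos hδ)).add (hb2 t _ (half_pos hδ))
  filter_upwards [hM, hsum.eventually (gt_mem_nhds (ENNReal.ofReal_pos.2 (half_pos hε)))]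
    with n hVn hsumn
  calc ℙ {ω | δ < |U n ω - V n ω|} ≤ _ := measure_lt_abs_sub_le ℙ (U n) (V n) hδ hT
    _ ≤ ENNReal.ofReal (ε / 2) + ENNReal.ofReal (ε / 2) := add_le_add hVn.le hsumn.le
    _ = ENNReal.ofReal ε := by rw [← ENNReal.ofReal_add (by positivity) (by positivity), add_halves]

theorem ghosh_lemma {Ω : Type*} [MeasureSpace Ω] [IsProbabilityMeasure (ℙ : Measure Ω)]
    (U V : ℕ → Ω → ℝ)
    (hV : ∀ ε > (0 : ℝ), ∃ M : ℝ, ∀ᶠ n : ℕ in atTop,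
      ℙ {ω | M < |V n ω|} < ENNReal.ofReal ε)
    (hb1 : ∀ (t ε : ℝ), 0 < ε →
      Tendsto (fun n => ℙ {ω | t + ε ≤ U n ω ∧ V n ω ≤ t}) atTop (nhds 0))
    (hb2 : ∀ (t ε : ℝ), 0 < ε →
      Tendsto (fun n => ℙ {ω | U n ω ≤ t ∧ t + ε ≤ V n ω}) atTop (nhds 0)) :
    ∀ δ > (0 : ℝ), Tendsto (fun n => ℙ {ω | δ < |U n ω - V n ω|}) atTop (nhds 0) :=
  ghosh_lemma_general U V hV hb1 hb2
end

section
/- Let F_n be the empirical distribution function of i.i.d. X_1,...,X_n from a continuous distribution F, and conditionally on the data let X*_1,...,X*_n be i.i.d. from F_n. Then almost surely, for all sufficiently large n, the maximum number of bootstrap observations equal to any single value is less than 2 log n; consequently, if ξ̂*_{n,1,1} is the ⌊(n+1)/2⌋-th order statistic of |X*_i - v̂*_{n,1}| with v̂*_{n,1} = X*_{⌊(n+1)/2⌋:n}, and G*_n is the empirical CDF of the |X*_i - v̂*_{n,1}|, then almost surely G*_n(ξ̂*_{n,1,1}) = 1/2 + O(log n / n) as n → ∞. -/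
open MeasureTheory ProbabilityTheory Filter Set
open scoped Classical

variable {Ω : Type*}

open scoped ENNReal Nat

/-!
Since the law of the data has no atoms, the `X i` are a.s. pairwise distinct, so a value occurs
in the bootstrap sample exactly as often as its index is drawn. Among `n` uniform draws, a fixed
index is drawn at least `m` times with probability at most `C(n, m) n⁻ᵐ ≤ 1 / m!`; for
`m = ⌈2 log n⌉` the union bound over the `n` indices gives `n / m! = O(n⁻³)`, which is summable,
and Borel–Cantelli applies.

The empirical CDF at the `k`-th order statistic lies between `k / n` and `(k - 1 + t) / n`, where
`t` is the number of observations tied with it. A tie of `|X*ᵢ - v|` at `q` is a tie of `X*ᵢ` at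
`v + q` or `v - q`, so `t < 4 log n`.
-/

section OrderStatistic

variable {ι α : Type*} [LinearOrder α]

theorem Finset.exists_filter_le_eq_filter_mem {s : Finset ι} {Y : ι → α} {D : Set α}
    (hD : IsLowerSet D) (h : ∃ i ∈ s, Y i ∈ D) :
    ∃ i ∈ s, Y i ∈ D ∧ s.filter (fun j => Y j ≤ Y i) = s.filter (fun j => Y j ∈ D) := by
  obtain ⟨i, hi, hmax⟩ := (s.filter (fun j => Y j ∈ D)).exists_max_image Y
    (by simpa [Finset.Nonempty] using h)
  rw [Finset.mem_filter] at hi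
  refine ⟨i, hi.1, hi.2, Finset.filter_congr fun j hj => ⟨fun hji => hD hji hi.2, fun hjD => ?_⟩⟩
  exact hmax j (Finset.mem_filter.mpr ⟨hj, hjD⟩)

theorem isLeast_orderStat {n k : ℕ} (Y : ℕ → ℝ) (hk : 1 ≤ k) (hkn : k ≤ n) :
    IsLeast {x | k ≤ ((Finset.range n).filter (fun i => Y i ≤ x)).card} (orderStat n k Y) := by
  set S := {x | k ≤ ((Finset.range n).filter (fun i => Y i ≤ x)).card}
  suffices ∃ q, IsLeast S q by
    obtain ⟨q, hq⟩ := this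
    rwa [orderStat, hq.csInf_eq]
  set T := (Finset.range n).filter (fun i => Y i ∈ S)
  have hT : T.Nonempty := by
    obtain ⟨i, hi, -, hall⟩ := (Finset.range n).exists_filter_le_eq_filter_mem (Y := Y) (D := univ)
      isLowerSet_univ ⟨0, Finset.mem_range.mpr (by omega), trivial⟩
    refine ⟨i, Finset.mem_filter.mpr ⟨hi, ?_⟩⟩
    simpa [S, hall] using hkn
  obtain ⟨i, hiT, hmin⟩ := T.exists_min_image Y hT
  refine ⟨Y i, (Finset.mem_filter.mp hiT).2, fun x hx => ?_⟩
  obtain ⟨j, hj, hjx, hcount⟩ :=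
    (Finset.range n).exists_filter_le_eq_filter_mem (isLowerSet_Iic x)
    (by simpa [Finset.Nonempty] using Finset.card_pos.mp (hk.trans hx))
  have hjT : j ∈ T := by
    simp only [mem_Iic] at hcount
    simpa [T, S, hj, hcount] using hx
  exact (hmin j hjT).trans hjx

theorem le_card_filter_le_orderStat {n k : ℕ} (Y : ℕ → ℝ) (hk : 1 ≤ k) (hkn : k ≤ n) :
    k ≤ ((Finset.range n).filter (fun i => Y i ≤ orderStat n k Y)).card :=
  (isLeast_orderStat Y hk hkn).1

theorem card_filter_lt_orderStat_lt {n k : ℕ} (Y : ℕ → ℝ) (hk : 1 ≤ k) (hkn : k ≤ n) :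
    ((Finset.range n).filter (fun i => Y i < orderStat n k Y)).card < k := by
  by_contra! hlt
  obtain ⟨j, -, hjq, hcount⟩ := (Finset.range n).exists_filter_le_eq_filter_mem
    (isLowerSet_Iio (orderStat n k Y))
    (by simpa [Finset.Nonempty] using Finset.card_pos.mp (hk.trans hlt))
  have hjS : k ≤ ((Finset.range n).filter (fun i => Y i ≤ Y j)).card := by
    simp only [mem_Iio] at hcount
    rwa [hcount]
  exact (not_le.mpr hjq) ((isLeast_orderStat Y hk hkn).2 hjS)

end OrderStatistic

def sampleCount {α : Type*} [DecidableEq α] (n : ℕ) (f : ℕ → α) (x : α) : ℕ :=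
  ((Finset.range n).filter (fun i => f i = x)).card

theorem card_filter_le_le_card_filter_lt_add_sampleCount (n : ℕ) (Y : ℕ → ℝ) (q : ℝ) :
    ((Finset.range n).filter (fun i => Y i ≤ q)).card ≤
      ((Finset.range n).filter (fun i => Y i < q)).card + sampleCount n Y q := by
  refine (Finset.card_le_card fun i hi => ?_).trans (Finset.card_union_le _ _)
  simp only [Finset.mem_filter, Finset.mem_union] at hi ⊢
  rcases hi.2.lt_or_eq with h | h
  · exact Or.inl ⟨hi.1, h⟩
  · exact Or.inr ⟨hi.1, h⟩

theorem abs_empCDF_orderStat_sub_half_le {n : ℕ} (hn : 1 ≤ n) (Y : ℕ → ℝ) :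
    |empCDF n Y (orderStat n ((n + 1) / 2) Y) - 1 / 2| ≤
      (sampleCount n Y (orderStat n ((n + 1) / 2) Y) : ℝ) / n := by
  have hk : 1 ≤ (n + 1) / 2 := by omega
  have hkn : (n + 1) / 2 ≤ n := by omega
  have hlow := le_card_filter_le_orderStat Y hk hkn
  have hlt := card_filter_lt_orderStat_lt Y hk hkn
  have hsplit :=
    card_filter_le_le_card_filter_lt_add_sampleCount n Y (orderStat n ((n + 1) / 2) Y)
  set k := (n + 1) / 2
  set q := orderStat n k Y
  have hnk : (n : ℝ) ≤ 2 * k ∧ 2 * (k : ℝ) ≤ n + 1 := by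
    constructor <;> norm_cast <;> omega
  have hn' : (0 : ℝ) < n := by exact_mod_cast hn
  rw [empCDF, show ∀ c : ℝ, c / n - 1 / 2 = (c - n / 2) / n by intro c; field_simp,
    abs_div, abs_of_pos hn']
  gcongr
  rw [abs_le]
  constructor
  · have : (k : ℝ) ≤ ((Finset.range n).filter (fun i => Y i ≤ q)).card := by exact_mod_cast hlow
    linarith
  · have : (((Finset.range n).filter (fun i => Y i ≤ q)).card : ℝ) + 1 ≤
        k + sampleCount n Y q := by
      exact_mod_cast (by omega : _ + 1 ≤ _)
    linarith

theorem sampleCount_abs_sub_le (n : ℕ) (Z : ℕ → ℝ) (v q : ℝ) :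
    sampleCount n (fun i => |Z i - v|) q ≤ sampleCount n Z (v + q) + sampleCount n Z (v - q) := by
  refine (Finset.card_le_card fun i hi => ?_).trans (Finset.card_union_le _ _)
  simp only [Finset.mem_filter, Finset.mem_union] at hi ⊢
  rcases abs_eq ((abs_nonneg _).trans hi.2.le) |>.mp hi.2 with h | h
  · exact Or.inl ⟨hi.1, by linarith⟩
  · exact Or.inr ⟨hi.1, by linarith⟩

theorem sampleCount_comp_lt_of_injective {α β : Type*} [DecidableEq α] [DecidableEq β]
    {g : β → α} (hg : Function.Injective g) {f : ℕ → β} {n : ℕ} {b : ℝ} (hb : 0 < b)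
    (hf : ∀ i < n, (sampleCount n f (f i) : ℝ) < b) (x : α) :
    (sampleCount n (g ∘ f) x : ℝ) < b := by
  by_cases hx : ∃ i < n, g (f i) = x
  · obtain ⟨i, hi, rfl⟩ := hx
    simpa only [sampleCount, Function.comp_apply, hg.eq_iff] using hf i hi
  · simp only [not_exists, not_and] at hx
    simpa [sampleCount, Finset.filter_eq_empty_iff.mpr fun i hi => hx i (Finset.mem_range.mp hi)]

theorem nullSingletonClass_of_continuous_cdf (μ : Measure ℝ) [IsProbabilityMeasure μ]
    (h : Continuous (cdf μ)) : NullSingletonClass μ := by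
  refine ⟨fun x => ?_⟩
  rw [← measure_cdf μ, StieltjesFunction.measure_singleton,
    leftLim_eq_of_tendsto ((h.tendsto x).mono_left nhdsWithin_le_nhds), sub_self,
    ENNReal.ofReal_zero]

theorem choose_mul_inv_pow_le_inv_factorial (n m : ℕ) :
    (n.choose m : ℝ≥0∞) * (n : ℝ≥0∞)⁻¹ ^ m ≤ (m ! : ℝ≥0∞)⁻¹ := by
  have hnat : n.choose m * m ! ≤ n ^ m := by
    rw [mul_comm, ← Nat.descFactorial_eq_factorial_mul_choose]
    exact Nat.descFactorial_le_pow n m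
  rw [ENNReal.le_inv_iff_mul_le, ← ENNReal.inv_pow]
  calc (n.choose m : ℝ≥0∞) * ((n : ℝ≥0∞) ^ m)⁻¹ * m !
      = ((n.choose m * m ! : ℕ) : ℝ≥0∞) * ((n : ℝ≥0∞) ^ m)⁻¹ := by push_cast; ring
    _ ≤ (n : ℝ≥0∞) ^ m * ((n : ℝ≥0∞) ^ m)⁻¹ := by gcongr; exact_mod_cast hnat
    _ ≤ 1 := ENNReal.mul_inv_le_one _

theorem div_factorial_ceil_two_mul_log_le (n : ℕ) :
    (n : ℝ) / (⌈2 * Real.log n⌉₊)! ≤ Real.exp (Real.exp 2) * ((n : ℝ) ^ 3)⁻¹ := by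
  rcases n.eq_zero_or_pos with rfl | hn
  · simp
  set m := ⌈2 * Real.log n⌉₊
  have hn' : (0 : ℝ) < n := by exact_mod_cast hn
  have hexp : (n : ℝ) ^ 4 ≤ Real.exp 2 ^ m := by
    rw [← Real.exp_nat_mul, ← Real.exp_log hn', ← Real.exp_nat_mul, Real.exp_le_exp]
    have := Nat.le_ceil (2 * Real.log n)
    push_cast
    linarith
  calc (n : ℝ) / m ! = n / Real.exp 2 ^ m * (Real.exp 2 ^ m / m !) := by
        field_simp
    _ ≤ n / n ^ 4 * Real.exp (Real.exp 2) := by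
        gcongr
        exact Real.pow_div_factorial_le_exp _ (Real.exp_pos 2).le m
    _ = Real.exp (Real.exp 2) * ((n : ℝ) ^ 3)⁻¹ := by
        field_simp

theorem tsum_div_factorial_ceil_two_mul_log_ne_top :
    ∑' n : ℕ, (n : ℝ≥0∞) / (⌈2 * Real.log n⌉₊)! ≠ ∞ := by
  have hsum : Summable fun n : ℕ => (n : ℝ) / (⌈2 * Real.log n⌉₊)! :=
    Summable.of_nonneg_of_le (fun n => by positivity) div_factorial_ceil_two_mul_log_le
      ((Real.summable_nat_pow_inv.mpr (by norm_num)).mul_left _)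
  have hreal : ∀ n : ℕ, (n : ℝ≥0∞) / (⌈2 * Real.log n⌉₊)! =
      ENNReal.ofReal ((n : ℝ) / (⌈2 * Real.log n⌉₊)!) := fun n => by
    rw [ENNReal.ofReal_div_of_pos (by positivity), ENNReal.ofReal_natCast, ENNReal.ofReal_natCast]
  simp_rw [hreal]
  rw [← ENNReal.ofReal_tsum_of_nonneg (fun n => by positivity) hsum]
  exact ENNReal.ofReal_ne_top

section Probability

variable {Ω : Type*} [MeasurableSpace Ω] {P : Measure Ω}

theorem measure_eq_eq_zero_of_indepFun [IsFiniteMeasure P] {X Y : Ω → ℝ} (hX : Measurable X)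
    (hY : Measurable Y) (hXY : IndepFun X Y P) [NullSingletonClass (P.map Y)] :
    P {ω | X ω = Y ω} = 0 := by
  have hdiag : MeasurableSet {p : ℝ × ℝ | p.1 = p.2} :=
    measurableSet_eq_fun measurable_fst measurable_snd
  rw [← Set.preimage_ofPred_eq (f := fun ω => (X ω, Y ω)) (p := fun p : ℝ × ℝ => p.1 = p.2),
    ← Measure.map_apply (hX.prodMk hY) hdiag,
    hXY.map_prod_eq_prod_map_map hX.aemeasurable hY.aemeasurable, Measure.prod_apply hdiag]
  simp [Set.preimage, measure_singleton]

theorem ae_injective_of_pairwise_indepFun [IsFiniteMeasure P] {ι : Type*} [Countable ι]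
    {X : ι → Ω → ℝ} (hX : ∀ i, Measurable (X i))
    (hindep : Pairwise fun i j => IndepFun (X i) (X j) P)
    [∀ i, NullSingletonClass (P.map (X i))] : ∀ᵐ ω ∂P, Function.Injective (fun i => X i ω) := by
  simp only [Function.Injective, ae_all_iff]
  intro i j
  by_cases hij : i = j
  · exact Eventually.of_forall fun _ _ => hij
  · have := measure_eq_eq_zero_of_indepFun (hX i) (hX j) (hindep hij)
    filter_upwards [measure_eq_zero_iff_ae_notMem.mp this] with ω hω heq
    exact absurd heq hω

theorem ae_lt_of_measure_eq_inv [IsProbabilityMeasure P] {Y : Ω → ℕ} (hY : Measurable Y)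
    {n : ℕ} (hn : n ≠ 0) (hunif : ∀ k < n, P {ω | Y ω = k} = (n : ℝ≥0∞)⁻¹) : ∀ᵐ ω ∂P, Y ω < n := by
  rw [ae_iff_measure_eq (measurableSet_lt hY measurable_const).nullMeasurableSet, measure_univ]
  have hpre : {ω | Y ω < n} = Y ⁻¹' ↑(Finset.range n) := by ext; simp
  rw [hpre, ← sum_measure_preimage_singleton _ fun k _ => hY (measurableSet_singleton k),
    Finset.sum_eq_card_nsmul (f := fun k => P (Y ⁻¹' {k})) fun k hk =>
      hunif k (Finset.mem_range.mp hk),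
    Finset.card_range, nsmul_eq_mul,
    ENNReal.mul_inv_cancel (by exact_mod_cast hn) (ENNReal.natCast_ne_top n)]

theorem measure_le_sampleCount_le {K : ℕ → Ω → ℕ} (hindep : iIndepFun K P) {k : ℕ} {p : ℝ≥0∞}
    (hp : ∀ i, P {ω | K i ω = k} = p) (n m : ℕ) :
    P {ω | m ≤ sampleCount n (fun i => K i ω) k} ≤ n.choose m * p ^ m := by
  calc P {ω | m ≤ sampleCount n (fun i => K i ω) k}
      ≤ P (⋃ S ∈ (Finset.range n).powersetCard m, ⋂ i ∈ S, K i ⁻¹' {k}) := by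
        refine measure_mono fun ω hω => ?_
        obtain ⟨S, hS, hcard⟩ := Finset.exists_subset_card_eq (s := (Finset.range n).filter _) hω
        simp only [mem_iUnion, mem_iInter, Finset.mem_powersetCard]
        exact ⟨S, ⟨hS.trans (Finset.filter_subset _ _), hcard⟩,
          fun i hi => (Finset.mem_filter.mp (hS hi)).2⟩
    _ ≤ ∑ S ∈ (Finset.range n).powersetCard m, P (⋂ i ∈ S, K i ⁻¹' {k}) :=
        measure_biUnion_finset_le _ _
    _ = ∑ S ∈ (Finset.range n).powersetCard m, p ^ m := by
        refine Finset.sum_congr rfl fun S hS => ?_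
        rw [hindep.measure_inter_preimage_eq_mul S fun _ _ => measurableSet_singleton k,
          Finset.prod_eq_pow_card (f := fun i => P (K i ⁻¹' {k})) fun i _ => hp i,
          (Finset.mem_powersetCard.mp hS).2]
    _ = n.choose m * p ^ m := by simp

theorem measure_exists_le_sampleCount_le {K : ℕ → Ω → ℕ} (hindep : iIndepFun K P) {n : ℕ}
    (hunif : ∀ i k, k < n → P {ω | K i ω = k} = (n : ℝ≥0∞)⁻¹) (m : ℕ) :
    P {ω | ∃ k < n, m ≤ sampleCount n (fun i => K i ω) k} ≤ n / m ! := by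
  calc P {ω | ∃ k < n, m ≤ sampleCount n (fun i => K i ω) k}
      = P (⋃ k ∈ Finset.range n, {ω | m ≤ sampleCount n (fun i => K i ω) k}) := by
        congr 1; ext; simp
    _ ≤ ∑ k ∈ Finset.range n, P {ω | m ≤ sampleCount n (fun i => K i ω) k} :=
        measure_biUnion_finset_le _ _
    _ ≤ ∑ _k ∈ Finset.range n, (m ! : ℝ≥0∞)⁻¹ := by
        refine Finset.sum_le_sum fun k hk => ?_
        have hk' := Finset.mem_range.mp hk
        exact (measure_le_sampleCount_le hindep (fun i => hunif i k hk') n m).trans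
          (choose_mul_inv_pow_le_inv_factorial n m)
    _ = n / m ! := by simp [div_eq_mul_inv]

theorem ae_eventually_sampleCount_lt_two_mul_log [IsProbabilityMeasure P] {J : ℕ → ℕ → Ω → ℕ}
    (hJmeas : ∀ n i, Measurable (J n i))
    (hJunif : ∀ n i k, k < n → P {ω | J n i ω = k} = (n : ℝ≥0∞)⁻¹)
    (hJindep : ∀ n, iIndepFun (J n) P) :
    ∀ᵐ ω ∂P, ∀ᶠ n in atTop, ∀ i < n,
      (sampleCount n (fun j => J n j ω) (J n i ω) : ℝ) < 2 * Real.log n := by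
  have hrare := ae_eventually_notMem (μ := P)
    (s := fun n => {ω | ∃ k < n, ⌈2 * Real.log n⌉₊ ≤ sampleCount n (fun i => J n i ω) k})
    (ne_top_of_le_ne_top tsum_div_factorial_ceil_two_mul_log_ne_top
      (ENNReal.tsum_le_tsum fun n => measure_exists_le_sampleCount_le (hJindep n) (hJunif n) _))
  have hrange : ∀ᵐ ω ∂P, ∀ n, n ≠ 0 → ∀ i, J n i ω < n := by
    refine ae_all_iff.mpr fun n => ?_
    rcases eq_or_ne n 0 with rfl | hn
    · exact Eventually.of_forall fun _ h => absurd rfl h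
    · filter_upwards [ae_all_iff.mpr fun i => ae_lt_of_measure_eq_inv (hJmeas n i) hn (hJunif n i)]
        with ω hω _ using hω
  filter_upwards [hrare, hrange] with ω hω hr
  filter_upwards [hω] with n hn i hi
  simp only [not_exists, not_and, not_le] at hn
  exact Nat.lt_ceil.mp (hn _ (hr n (by omega) i))

end Probability

theorem bootstrap_tie_control_general {Ω : Type*}
    [MeasureSpace Ω] [IsProbabilityMeasure (ℙ : Measure Ω)]
    (X : ℕ → Ω → ℝ) (J : ℕ → ℕ → Ω → ℕ)
    (μ : Measure ℝ) [IsProbabilityMeasure μ]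
    (hXmeas : ∀ i, Measurable (X i))
    (hXdist : ∀ i, Measure.map (X i) ℙ = μ)
    (hXindep : iIndepFun X ℙ)
    (hJmeas : ∀ n i, Measurable (J n i))
    (hJunif : ∀ n i k, k < n → ℙ {ω | J n i ω = k} = (n : ENNReal)⁻¹)
    (hJindep : ∀ n, iIndepFun (J n) ℙ)
    (F : ℝ → ℝ) (hF : ∀ x, F x = (μ (Iic x)).toReal)
    (hFc : Continuous F) :
    (∀ᵐ ω ∂(ℙ : Measure Ω), ∀ᶠ n : ℕ in atTop, ∀ x : ℝ,
        (((Finset.range n).filter (fun i => bsample X J n i ω = x)).card : ℝ) <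
          2 * Real.log n) ∧
    (∀ᵐ ω ∂(ℙ : Measure Ω), ∃ C : ℝ, ∀ᶠ n : ℕ in atTop,
        |empCDF n (fun i => |bsample X J n i ω - bmed X J n 1 ω|) (bmad X J n 1 1 ω)
          - 1 / 2| ≤ C * Real.log n / n) := by
  have hties : ∀ᵐ ω ∂(ℙ : Measure Ω), ∀ᶠ n : ℕ in atTop, ∀ x : ℝ,
      (sampleCount n (fun i => bsample X J n i ω) x : ℝ) < 2 * Real.log n := by
    have hcdf : cdf μ = F := by
      ext x
      rw [hF, cdf_eq_real, measureReal_def]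
    have hatoms := nullSingletonClass_of_continuous_cdf μ (hcdf ▸ hFc)
    have : ∀ i, NullSingletonClass (Measure.map (X i) ℙ) := fun i => hXdist i ▸ hatoms
    filter_upwards [ae_injective_of_pairwise_indepFun hXmeas (fun _ _ hij => hXindep.indepFun hij),
        ae_eventually_sampleCount_lt_two_mul_log hJmeas hJunif hJindep]
      with ω hinj hJ
    filter_upwards [hJ, eventually_gt_atTop 1] with n hn hn1
    exact sampleCount_comp_lt_of_injective hinj
      (mul_pos two_pos (Real.log_pos (by exact_mod_cast hn1))) hn
  refine ⟨hties, ?_⟩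
  filter_upwards [hties] with ω hω
  refine ⟨4, ?_⟩
  filter_upwards [hω, eventually_ge_atTop 1] with n hn hn1
  set Z := fun i => bsample X J n i ω
  set v := bmed X J n 1 ω
  set q := bmad X J n 1 1 ω
  calc _ ≤ (sampleCount n (fun i => |Z i - v|) q : ℝ) / n :=
        abs_empCDF_orderStat_sub_half_le hn1 _
    _ ≤ ((sampleCount n Z (v + q) : ℝ) + sampleCount n Z (v - q)) / n := by
        gcongr
        exact_mod_cast sampleCount_abs_sub_le n Z v q
    _ ≤ 4 * Real.log n / n := by
        gcongr
        linarith [hn (v + q), hn (v - q)]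

theorem bootstrap_tie_control {Ω : Type*}
    [MeasureSpace Ω] [IsProbabilityMeasure (ℙ : Measure Ω)]
    (X : ℕ → Ω → ℝ) (J : ℕ → ℕ → Ω → ℕ)
    (μ : Measure ℝ) [IsProbabilityMeasure μ]
    (hXmeas : ∀ i, Measurable (X i))
    (hXdist : ∀ i, Measure.map (X i) ℙ = μ)
    (hXindep : iIndepFun X ℙ)
    (hJmeas : ∀ n i, Measurable (J n i))
    (hJunif : ∀ n i k, k < n → ℙ {ω | J n i ω = k} = (n : ENNReal)⁻¹)
    (hJindep : ∀ n, iIndepFun (J n) ℙ)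
    (hXJ : ∀ n, IndepFun (fun ω (i : ℕ) => X i ω) (fun ω (i : ℕ) => J n i ω) ℙ)
    (F : ℝ → ℝ) (hF : ∀ x, F x = (μ (Iic x)).toReal)
    (hFc : Continuous F) :
    (∀ᵐ ω ∂(ℙ : Measure Ω), ∀ᶠ n : ℕ in atTop, ∀ x : ℝ,
        (((Finset.range n).filter (fun i => bsample X J n i ω = x)).card : ℝ) <
          2 * Real.log n) ∧
    (∀ᵐ ω ∂(ℙ : Measure Ω), ∃ C : ℝ, ∀ᶠ n : ℕ in atTop,
        |empCDF n (fun i => |bsample X J n i ω - bmed X J n 1 ω|) (bmad X J n 1 1 ω)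
          - 1 / 2| ≤ C * Real.log n / n) :=
  bootstrap_tie_control_general X J μ hXmeas hXdist hXindep hJmeas hJunif hJindep F hF hFc
end
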